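/- Let T be a bounded linear operator on a complex Banach space X, and suppose that for every nonempty relatively open subset U of the spectrum σ(T), the glocal spectral subspace 𝒳_T(closure(U)) is dense in X. Then the local spectrum of the adjoint satisfies σ_{T*}(x) = σ(T*) for every nonzero x ∈ X*. -/

import Mathlib

/-!
If `w ∈ σ(T*)` lay in the local resolvent set of `x ≠ 0`, with `(T* - z) f(z) = x` near `w`,
take a compact neighbourhood `F` of `w` in `σ(T) ⊇ σ(T*)` on which `f` is defined. For every
`y ∈ 𝒳_T(F)`, with `(T - z) g(z) = y` off `F`, the functions `⟨f(z), y⟩` and `⟨x, g(z)⟩`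
agree where both are defined, and glue to an entire function vanishing at infinity (there `g` is
minus the resolvent applied to `y`). By Liouville it is zero, so `f(w)` kills the dense
subspace `𝒳_T(F)`, hence `f(w) = 0` and `x = (T* - w) f(w) = 0`.
-/

open Set Filter Topology Bornology Complex

noncomputable section




variable {X : Type*} [NormedAddCommGroup X] [NormedSpace ℂ X]

/-- The glocal spectral subspace `𝒳_T(F)` of a bounded operator `T`. -/
def glocalSubspace (T : X →L[ℂ] X) (F : Set ℂ) : Set X :=
  {x | ∃ f : ℂ → X, AnalyticOnNhd ℂ f Fᶜ ∧ ∀ z ∈ Fᶜ, T (f z) - z • f z = x}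

/-- The local resolvent set `ρ_T(x)`. -/
def localResolventSet (T : X →L[ℂ] X) (x : X) : Set ℂ :=
  ⋃₀ {U : Set ℂ | IsOpen U ∧ ∃ f : ℂ → X, AnalyticOnNhd ℂ f U ∧ ∀ z ∈ U, T (f z) - z • f z = x}

/-- The local spectrum `σ_T(x)`. -/
def localSpectrum (T : X →L[ℂ] X) (x : X) : Set ℂ := (localResolventSet T x)ᶜ

/-- The local spectral subspace `X_T(F)`. -/
def localSubspace (T : X →L[ℂ] X) (F : Set ℂ) : Set X := {x | localSpectrum T x ⊆ F}

/-- Dunford's property (C). -/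
def HasPropertyC (T : X →L[ℂ] X) : Prop :=
  ∀ F : Set ℂ, IsClosed F → IsClosed (localSubspace T F)

/-- The single-valued extension property. -/
def HasSVEP (T : X →L[ℂ] X) : Prop :=
  ∀ U : Set ℂ, IsOpen U → ∀ f : ℂ → X, AnalyticOnNhd ℂ f U →
    (∀ z ∈ U, T (f z) - z • f z = 0) → ∀ z ∈ U, f z = 0

/-- The point spectrum of an operator. -/
def pointSpectrum (T : X →L[ℂ] X) : Set ℂ := {μ : ℂ | ∃ x : X, x ≠ 0 ∧ T x = μ • x}

/-- The local spectral radius `r_T(x) = limsup_n ‖Tⁿx‖^(1/n)`. -/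
def localSpectralRadius (T : X →L[ℂ] X) (x : X) : ℝ :=
  Filter.limsup (fun n : ℕ => ‖(T ^ n) x‖ ^ (1 / (n : ℝ))) Filter.atTop

/-- The adjoint operator `T*` acting on the dual space `X*`. -/
def dualOp (T : X →L[ℂ] X) : StrongDual ℂ X →L[ℂ] StrongDual ℂ X :=
  (ContinuousLinearMap.compL ℂ X X ℂ).flip T

/-- Restriction of an operator to an invariant subspace. -/
def restrictOp (T : X →L[ℂ] X) (M : Submodule ℂ X) (h : ∀ x ∈ M, T x ∈ M) : M →L[ℂ] M :=
  (T.comp M.subtypeL).codRestrict M (fun x => h x.1 x.2)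

/-- The full spectrum `η(K)`: the union of `K` with all the bounded connected
components of its complement. -/
def fullSpectrum (K : Set ℂ) : Set ℂ :=
  K ∪ {z : ℂ | z ∉ K ∧ Bornology.IsBounded (connectedComponentIn Kᶜ z)}

/-- `U` is a nonempty relatively open subset of `σ(T)`. -/
def RelativelyOpenInSpectrum (T : X →L[ℂ] X) (U : Set ℂ) : Prop :=
  U.Nonempty ∧ ∃ V : Set ℂ, IsOpen V ∧ U = spectrum ℂ T ∩ V

lemma dualOp_one : dualOp (1 : X →L[ℂ] X) = 1 := rfl

lemma dualOp_mul (A B : X →L[ℂ] X) : dualOp (A * B) = dualOp B * dualOp A := rfl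

lemma dualOp_smul_one_sub (z : ℂ) (T : X →L[ℂ] X) :
    dualOp (z • 1 - T) = z • 1 - dualOp T := by
  simp only [dualOp, map_sub, map_smul]
  rfl

lemma isUnit_dualOp {A : X →L[ℂ] X} (hA : IsUnit A) : IsUnit (dualOp A) := by
  obtain ⟨u, rfl⟩ := hA
  exact ⟨⟨dualOp u, dualOp ↑u⁻¹, by rw [← dualOp_mul, u.inv_mul, dualOp_one],
    by rw [← dualOp_mul, u.mul_inv, dualOp_one]⟩, rfl⟩

lemma spectrum_dualOp_subset (T : X →L[ℂ] X) : spectrum ℂ (dualOp T) ⊆ spectrum ℂ T := by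
  intro z hz hzT
  rw [spectrum.mem_iff, Algebra.algebraMap_eq_smul_one] at hz
  rw [spectrum.mem_resolventSet_iff, Algebra.algebraMap_eq_smul_one] at hzT
  exact hz (dualOp_smul_one_sub z T ▸ isUnit_dualOp hzT)

section Resolvent

variable {Y : Type*} [NormedAddCommGroup Y] [NormedSpace ℂ Y] (S : Y →L[ℂ] Y)

lemma algebraMap_sub_apply (w : ℂ) (v : Y) :
    (algebraMap ℂ (Y →L[ℂ] Y) w - S) v = -(S v - w • v) := by
  simp [Algebra.algebraMap_eq_smul_one]

lemma sub_smul_neg_resolvent_apply {w : ℂ} (hw : w ∈ resolventSet ℂ S) (y : Y) :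
    S (-resolvent S w y) - w • -resolvent S w y = y := by
  have h : (algebraMap ℂ (Y →L[ℂ] Y) w - S) (resolvent S w y) = y :=
    congr($(Ring.mul_inverse_cancel _ hw) y)
  rw [algebraMap_sub_apply] at h
  simpa only [map_neg, smul_neg, neg_sub, sub_neg_eq_add, neg_add_eq_sub] using h

lemma eq_neg_resolvent_apply_of_sub_smul_eq {w : ℂ} (hw : w ∈ resolventSet ℂ S) {v y : Y}
    (h : S v - w • v = y) : v = -resolvent S w y := by
  have h' : resolvent S w ((algebraMap ℂ (Y →L[ℂ] Y) w - S) v) = v :=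
    congr($(Ring.inverse_mul_cancel _ hw) v)
  rw [← h', algebraMap_sub_apply, h, map_neg]

variable [CompleteSpace Y]

lemma analyticOnNhd_resolvent_apply (y : Y) :
    AnalyticOnNhd ℂ (fun z => resolvent S z y) (resolventSet ℂ S) :=
  DifferentiableOn.analyticOnNhd
    (fun _ hz => ((spectrum.hasDerivAt_resolvent_const_left hz).differentiableAt.clm_apply
      (differentiableAt_const y)).differentiableWithinAt)
    (spectrum.isOpen_resolventSet S)

lemma resolventSet_subset_localResolventSet (y : Y) :
    resolventSet ℂ S ⊆ localResolventSet S y := fun _ hw =>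
  ⟨resolventSet ℂ S, ⟨spectrum.isOpen_resolventSet S, fun z => -resolvent S z y,
    fun z hz => (analyticOnNhd_resolvent_apply S y z hz).neg,
    fun _ hz => sub_smul_neg_resolvent_apply S hz y⟩, hw⟩

lemma localSpectrum_subset_spectrum (y : Y) : localSpectrum S y ⊆ spectrum ℂ S :=
  compl_subset_compl.mpr (resolventSet_subset_localResolventSet S y)

lemma tendsto_cocompact_of_sub_smul_eq {F : Set ℂ} (hF : IsCompact F) {g : ℂ → Y} {y : Y}
    (hg : ∀ z ∈ Fᶜ, S (g z) - z • g z = y) : Tendsto g (cocompact ℂ) (𝓝 0) := by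
  have hres : Tendsto (fun z => -resolvent S z y) (cocompact ℂ) (𝓝 0) := by
    rw [← Metric.cobounded_eq_cocompact]
    simpa using (((ContinuousLinearMap.apply ℂ Y y).continuous.tendsto 0).comp
      (spectrum.resolvent_tendsto_cobounded S)).neg
  refine hres.congr' ?_
  filter_upwards [hF.compl_mem_cocompact, (spectrum.isCompact S).compl_mem_cocompact]
    with z hzF hzσ
  have hzS : z ∈ resolventSet ℂ S :=
    spectrum.mem_resolventSet_iff.mpr (spectrum.notMem_iff.mp hzσ)
  exact (eq_neg_resolvent_apply_of_sub_smul_eq S hzS (hg z hzF)).symm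

end Resolvent

lemma dualOp_sub_smul_apply (T : X →L[ℂ] X) (φ : StrongDual ℂ X) (z : ℂ) (v : X) :
    (dualOp T φ - z • φ) v = φ (T v - z • v) := by
  simp [dualOp]

lemma apply_eq_zero_of_mem_glocalSubspace [CompleteSpace X] {T : X →L[ℂ] X}
    {x : StrongDual ℂ X} {W F : Set ℂ} (hW : IsOpen W) (hF : IsCompact F) (hFW : F ⊆ W)
    {f : ℂ → StrongDual ℂ X} (hf : AnalyticOnNhd ℂ f W)
    (hfx : ∀ z ∈ W, dualOp T (f z) - z • f z = x) {y : X} (hy : y ∈ glocalSubspace T F)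
    {w : ℂ} (hw : w ∈ W) : f w y = 0 := by
  classical
  obtain ⟨g, hg, hgy⟩ := hy
  have hagree : ∀ z ∈ W, z ∈ Fᶜ → f z y = x (g z) := fun z hzW hzF => by
    rw [← hfx z hzW, dualOp_sub_smul_apply, hgy z hzF]
  set H : ℂ → ℂ := F.piecewise (fun z => f z y) (fun z => x (g z)) with hH
  have hHW : EqOn H (fun z => f z y) W := fun z hz => by
    by_cases hzF : z ∈ F
    · simp [hH, hzF]
    · simp [hH, hzF, hagree z hz hzF]
  have hHF : EqOn H (fun z => x (g z)) Fᶜ := fun z hz => by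
    simp [hH, Set.notMem_of_mem_compl hz]
  have hHd : Differentiable ℂ H := by
    have hcover : W ∪ Fᶜ = univ :=
      univ_subset_iff.mp ((union_compl_self F).symm.subset.trans (union_subset_union_left _ hFW))
    rw [← differentiableOn_univ, ← hcover]
    exact ((hf.differentiableOn.clm_apply (differentiableOn_const y)).congr hHW).union_of_isOpen
      ((x.differentiable.comp_differentiableOn hg.differentiableOn).congr hHF) hW
      hF.isClosed.isOpen_compl
  have hlim : Tendsto H (cocompact ℂ) (𝓝 0) := by
    have hxg := ((x.continuous.tendsto 0).comp (tendsto_cocompact_of_sub_smul_eq T hF hgy))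
    rw [map_zero] at hxg
    exact hxg.congr' (hHF.eventuallyEq_of_mem hF.compl_mem_cocompact).symm
  exact (hHW hw).symm.trans (hHd.apply_eq_of_tendsto_cocompact w hlim)

/-- Under the density assumption on glocal spectral subspaces of `T`, the local spectrum
of the adjoint satisfies `σ_{T*}(x) = σ(T*)` for every nonzero `x ∈ X*`. -/
theorem adjoint_localSpectrum_eq {X : Type*} [NormedAddCommGroup X] [NormedSpace ℂ X]
    [CompleteSpace X] (T : X →L[ℂ] X)
    (hdense : ∀ U : Set ℂ, RelativelyOpenInSpectrum T U →
      Dense (glocalSubspace T (closure U))) :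
    ∀ x : StrongDual ℂ X, x ≠ 0 →
      localSpectrum (dualOp T) x = spectrum ℂ (dualOp T) := by
  intro x hx
  refine (localSpectrum_subset_spectrum _ x).antisymm
    fun w hw ⟨W, ⟨hW, f, hf, hfx⟩, hwW⟩ => hx ?_
  obtain ⟨r, hr, hrW⟩ := Metric.isOpen_iff.mp hW w hwW
  set F := closure (spectrum ℂ T ∩ Metric.ball w (r / 2))
  have hFW : F ⊆ W := (closure_mono inter_subset_right).trans <|
    Metric.closure_ball_subset_closedBall.trans <|
      (Metric.closedBall_subset_ball (by linarith)).trans hrW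
  have hF : IsCompact F := (Metric.isBounded_ball.subset inter_subset_right).isCompact_closure
  have hFdense : Dense (glocalSubspace T F) := hdense _
    ⟨⟨w, spectrum_dualOp_subset T hw, Metric.mem_ball_self (by positivity)⟩, _,
      Metric.isOpen_ball, rfl⟩
  have hfw : f w = 0 := DFunLike.coe_injective <| Continuous.ext_on hFdense (f w).continuous
    continuous_zero fun y hy => apply_eq_zero_of_mem_glocalSubspace hW hF hFW hf hfx hy hwW
  simpa [hfw] using (hfx w hwW).symm

end
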